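/- arXiv:1710.09584 — 2 statements merged into one kernel-verified Lean document; each statement's English description precedes it below -/
import Mathlib

section
/- Let K ∈ ℓ¹(ℤ, B(H)) be supported on nonnegative indices (causal), G ∈ ℓ¹(ℤ, B(H)) supported on strictly negative indices (strictly anticausal), and let W₊, W₊⁻¹ ∈ ℓ¹(ℤ, B(H)) be causal elements that are mutually inverse for convolution, with V = W₊* (adjoint-reflected sequence, V_n = (W₊)_{-n}*) so that V and V⁻¹ are anticausal. If V⁻¹ * G = V⁻¹ * F - W₊ * K for some F ∈ ℓ¹(ℤ, B(H)), then K = W₊⁻¹ * 𝒞(V⁻¹ * F), where 𝒞 is the causal-part projection. -/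
/-- Bilateral convolution of operator-valued sequences. -/
noncomputable def conv {H : Type*} [NormedAddCommGroup H] [NormedSpace ℂ H]
    (a b : ℤ → H →L[ℂ] H) : ℤ → H →L[ℂ] H :=
  fun n => ∑' m : ℤ, (a (n - m)).comp (b m)

/-- Causal part of an operator-valued sequence. -/
def causalPart {H : Type*} [NormedAddCommGroup H] [NormedSpace ℂ H]
    (a : ℤ → H →L[ℂ] H) : ℤ → H →L[ℂ] H :=
  fun n => if 0 ≤ n then a n else 0

section aux

variable {H : Type*} [NormedAddCommGroup H] [NormedSpace ℂ H] [CompleteSpace H]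

lemma norm_le_tsum_norm {a : ℤ → H →L[ℂ] H} (ha : Summable fun n => ‖a n‖) (n : ℤ) :
    ‖a n‖ ≤ ∑' m, ‖a m‖ :=
  Summable.le_tsum ha n fun _ _ => norm_nonneg _

lemma summable_conv_term {a b : ℤ → H →L[ℂ] H} (ha : Summable fun n => ‖a n‖)
    (hb : Summable fun n => ‖b n‖) (n : ℤ) :
    Summable fun m => (a (n - m)).comp (b m) := by
  apply Summable.of_norm
  apply Summable.of_nonneg_of_le (fun _ => norm_nonneg _)
    (fun m => ((a (n - m)).opNorm_comp_le (b m)).trans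
      (mul_le_mul_of_nonneg_right (norm_le_tsum_norm ha _) (norm_nonneg _)))
  exact hb.mul_left _

def shear₁ (n : ℤ) : ℤ × ℤ ≃ ℤ × ℤ where
  toFun p := (n - p.1, p.1 - p.2)
  invFun q := (n - q.1, n - q.1 - q.2)
  left_inv p := by obtain ⟨x, y⟩ := p; simp [Prod.ext_iff]
  right_inv q := by obtain ⟨x, y⟩ := q; simp [Prod.ext_iff]

def shear₂ (n : ℤ) : ℤ × ℤ ≃ ℤ × ℤ where
  toFun p := (n - p.1 - p.2, p.2)
  invFun q := (n - q.1 - q.2, q.2)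
  left_inv p := by obtain ⟨x, y⟩ := p; simp [Prod.ext_iff]; omega
  right_inv q := by obtain ⟨x, y⟩ := q; simp [Prod.ext_iff]; omega

lemma conv_assoc {a b c : ℤ → H →L[ℂ] H} (ha : Summable fun n => ‖a n‖)
    (hb : Summable fun n => ‖b n‖) (hc : Summable fun n => ‖c n‖) :
    conv (conv a b) c = conv a (conv b c) := by
  funext n
  set g : ℤ × ℤ → H →L[ℂ] H :=
    fun p => (a p.1).comp ((b p.2).comp (c (n - p.1 - p.2))) with hgdef
  have hC : ∀ m, ‖c m‖ ≤ ∑' m, ‖c m‖ := norm_le_tsum_norm hc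
  have hgsum : Summable g := by
    apply Summable.of_norm
    refine Summable.of_nonneg_of_le (fun _ => norm_nonneg _)
      (f := fun p : ℤ × ℤ => ‖a p.1‖ * (‖b p.2‖ * ∑' m, ‖c m‖)) ?_ ?_
    · intro p
      calc ‖g p‖ ≤ ‖a p.1‖ * ‖(b p.2).comp (c (n - p.1 - p.2))‖ :=
            (a p.1).opNorm_comp_le _
        _ ≤ ‖a p.1‖ * (‖b p.2‖ * ‖c (n - p.1 - p.2)‖) := by
            exact mul_le_mul_of_nonneg_left ((b p.2).opNorm_comp_le _) (norm_nonneg _)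
        _ ≤ ‖a p.1‖ * (‖b p.2‖ * ∑' m, ‖c m‖) :=
            mul_le_mul_of_nonneg_left
              (mul_le_mul_of_nonneg_left (hC _) (norm_nonneg _)) (norm_nonneg _)
    · exact ha.mul_of_nonneg (hb.mul_right _) (fun _ => norm_nonneg _)
        (fun _ => mul_nonneg (norm_nonneg _) (tsum_nonneg fun _ => norm_nonneg _))
  -- right side
  have hgE1 : ∀ p : ℤ × ℤ, g ((shear₁ n) p) = (a (n - p.1)).comp ((b (p.1 - p.2)).comp (c p.2)) := by
    intro p
    have h : n - (n - p.1) - (p.1 - p.2) = p.2 := by omega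
    show (a (n - p.1)).comp ((b (p.1 - p.2)).comp (c (n - (n - p.1) - (p.1 - p.2)))) = _
    rw [h]
  have h1 : conv a (conv b c) n = ∑' q, g q := by
    have step : ∀ m : ℤ, (a (n - m)).comp (conv b c m)
        = ∑' k, (a (n - m)).comp ((b (m - k)).comp (c k)) := by
      intro m
      have := (ContinuousLinearMap.compL ℂ H H H (a (n - m))).map_tsum
        (summable_conv_term hb hc m)
      simpa [conv] using this
    calc conv a (conv b c) n = ∑' m, (a (n - m)).comp (conv b c m) := rfl
      _ = ∑' m, ∑' k, (a (n - m)).comp ((b (m - k)).comp (c k)) := tsum_congr step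
      _ = ∑' m, ∑' k, g ((shear₁ n) (m, k)) := by
          refine tsum_congr fun m => tsum_congr fun k => ?_
          rw [hgE1]
      _ = ∑' p : ℤ × ℤ, g ((shear₁ n) p) := by
          refine (Summable.tsum_prod' (f := fun p : ℤ × ℤ => g (shear₁ n p)) ?_ ?_).symm
          · exact ((shear₁ n).summable_iff (f := g)).2 hgsum
          · intro m
            exact ((((shear₁ n).summable_iff (f := g)).2 hgsum).prod_factor m)
      _ = ∑' q, g q := (shear₁ n).tsum_eq g
  -- left side
  have hgE2 : ∀ p : ℤ × ℤ, g ((shear₂ n) p) = (a (n - p.1 - p.2)).comp ((b p.2).comp (c p.1)) := by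
    intro p
    have h : n - (n - p.1 - p.2) - p.2 = p.1 := by omega
    show (a (n - p.1 - p.2)).comp ((b p.2).comp (c (n - (n - p.1 - p.2) - p.2))) = _
    rw [h]
  have h2 : conv (conv a b) c n = ∑' q, g q := by
    have step : ∀ m : ℤ, (conv a b (n - m)).comp (c m)
        = ∑' k, ((a (n - m - k)).comp (b k)).comp (c m) := by
      intro m
      have := ((ContinuousLinearMap.compL ℂ H H H).flip (c m)).map_tsum
        (summable_conv_term ha hb (n - m))
      simpa [conv] using this
    calc conv (conv a b) c n = ∑' m, (conv a b (n - m)).comp (c m) := rfl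
      _ = ∑' m, ∑' k, ((a (n - m - k)).comp (b k)).comp (c m) := tsum_congr step
      _ = ∑' m, ∑' k, g ((shear₂ n) (m, k)) := by
          refine tsum_congr fun m => tsum_congr fun k => ?_
          rw [hgE2, ContinuousLinearMap.comp_assoc]
      _ = ∑' p : ℤ × ℤ, g ((shear₂ n) p) := by
          refine (Summable.tsum_prod' (f := fun p : ℤ × ℤ => g (shear₂ n p)) ?_ ?_).symm
          · exact ((shear₂ n).summable_iff (f := g)).2 hgsum
          · intro m
            exact ((((shear₂ n).summable_iff (f := g)).2 hgsum).prod_factor m)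
      _ = ∑' q, g q := (shear₂ n).tsum_eq g
  rw [h1, h2]

lemma conv_delta_left (K : ℤ → H →L[ℂ] H) :
    conv (fun n => if n = 0 then (ContinuousLinearMap.id ℂ H) else 0) K = K := by
  funext n
  show (∑' m : ℤ, ((if n - m = 0 then (ContinuousLinearMap.id ℂ H) else 0)).comp (K m)) = K n
  rw [tsum_eq_single n]
  · simp
  · intro m hm
    have : ¬ (n - m = 0) := by omega
    simp [this]

end aux

/-- Abstract causal Wiener filter: if `V⁻¹ * G = V⁻¹ * F - W₊ * K` with `K` causal, `G`
strictly anticausal, `W₊` causal with causal convolution-inverse `W₊⁻¹` and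
`V⁻¹ = (W₊⁻¹)*` the adjoint-reflected sequence, then `K = W₊⁻¹ * 𝒞(V⁻¹ * F)`. -/
theorem causal_wiener_filter {H : Type*} [NormedAddCommGroup H]
    [InnerProductSpace ℂ H] [CompleteSpace H]
    (K G W Winv F : ℤ → H →L[ℂ] H)
    (hK : Summable fun n => ‖K n‖) (hG : Summable fun n => ‖G n‖)
    (hW : Summable fun n => ‖W n‖) (hWinv : Summable fun n => ‖Winv n‖)
    (hF : Summable fun n => ‖F n‖)
    (hKc : ∀ n : ℤ, n < 0 → K n = 0)
    (hGs : ∀ n : ℤ, 0 ≤ n → G n = 0)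
    (hWc : ∀ n : ℤ, n < 0 → W n = 0)
    (hWinvc : ∀ n : ℤ, n < 0 → Winv n = 0)
    (hinv₁ : conv W Winv = fun n => if n = 0 then (ContinuousLinearMap.id ℂ H) else 0)
    (hinv₂ : conv Winv W = fun n => if n = 0 then (ContinuousLinearMap.id ℂ H) else 0)
    (Vinv : ℤ → H →L[ℂ] H)
    (hVinv : ∀ n : ℤ, Vinv n = ContinuousLinearMap.adjoint (Winv (-n)))
    (heq : conv Vinv G = conv Vinv F - conv W K) :
    K = conv Winv (causalPart (conv Vinv F)) := by
  have hVanti : ∀ n : ℤ, 0 < n → Vinv n = 0 := by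
    intro n hn
    rw [hVinv, hWinvc _ (by omega)]
    simp
  have hVG : ∀ n : ℤ, 0 ≤ n → conv Vinv G n = 0 := by
    intro n hn
    have : ∀ m : ℤ, (Vinv (n - m)).comp (G m) = 0 := by
      intro m
      rcases le_or_gt 0 m with hm | hm
      · rw [hGs m hm]; simp
      · rw [hVanti (n - m) (by omega)]; simp
    calc conv Vinv G n = ∑' m : ℤ, (Vinv (n - m)).comp (G m) := rfl
      _ = ∑' _ : ℤ, (0 : H →L[ℂ] H) := tsum_congr this
      _ = 0 := tsum_zero
  have hWK : ∀ n : ℤ, n < 0 → conv W K n = 0 := by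
    intro n hn
    have : ∀ m : ℤ, (W (n - m)).comp (K m) = 0 := by
      intro m
      rcases lt_or_ge m 0 with hm | hm
      · rw [hKc m hm]; simp
      · rw [hWc (n - m) (by omega)]; simp
    calc conv W K n = ∑' m : ℤ, (W (n - m)).comp (K m) := rfl
      _ = ∑' _ : ℤ, (0 : H →L[ℂ] H) := tsum_congr this
      _ = 0 := tsum_zero
  have hCP : causalPart (conv Vinv F) = conv W K := by
    funext n
    show (if 0 ≤ n then conv Vinv F n else 0) = conv W K n
    split_ifs with h
    · have h1 : conv Vinv G n = conv Vinv F n - conv W K n := congrFun heq n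
      have h2 : conv Vinv G n = 0 := hVG n h
      rw [h2] at h1
      linear_combination (norm := abel) -h1
    · exact (hWK n (by omega)).symm
  calc K = conv (fun n => if n = 0 then (ContinuousLinearMap.id ℂ H) else 0) K :=
        (conv_delta_left K).symm
    _ = conv (conv Winv W) K := by rw [hinv₂]
    _ = conv Winv (conv W K) := conv_assoc hWinv hW hK
    _ = conv Winv (causalPart (conv Vinv F)) := by rw [hCP]
end

section
/- Fix integers k > l + 1 ≥ 1 and let A = (∑_{α} (2ℕ)^{(l−k)α})^{1/2} (finite). Let h = (h_α)_{α∈ℓ} and f = (f_α)_{α∈ℓ} be complex-valued families with ‖h‖_l² = ∑_α |h_α|² (2ℕ)^{−lα} < ∞ and ‖f‖_k² = ∑_α |f_α|² (2ℕ)^{−kα} < ∞. Define the Wick/Cauchy product (h∘f)_γ = ∑_{α+β=γ} h_α f_β. Then ‖h∘f‖_k ≤ A · ‖h‖_l · ‖f‖_k. -/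
/-- The weight `(2ℕ)^{-kα} = ∏_j (2j)^{-k α_j}` (index `j : ℕ` stands for `j + 1 ≥ 1`). -/
noncomputable def wt (k : ℤ) (α : ℕ →₀ ℕ) : ℝ :=
  ∏ j ∈ α.support, (2 * ((j : ℝ) + 1)) ^ (-k * (α j : ℤ))

/-- The Wick (Cauchy) product of coefficient families indexed by multi-indices. -/
noncomputable def wick (h f : (ℕ →₀ ℕ) → ℂ) (γ : ℕ →₀ ℕ) : ℂ :=
  ∑ p ∈ Finset.HasAntidiagonal.antidiagonal γ, h p.1 * f p.2

/-! For `α + β = γ` the weight splits as `(2ℕ)^{-kγ} = (2ℕ)^{-(k-l)α} (2ℕ)^{-lα} (2ℕ)^{-kβ}`, so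
Cauchy–Schwarz over the antidiagonal of `γ` gives
`|(h∘f)_γ|² (2ℕ)^{-kγ} ≤ A² ∑_{α+β=γ} |h_α|² (2ℕ)^{-lα} |f_β|² (2ℕ)^{-kβ}`,
and summing over `γ` turns the right-hand side into `A² ‖h‖_l² ‖f‖_k²`.
The constant `A` is finite because `(2ℕ)^{-rα} = ∏_j x_j^{α_j}` with `x_j = (2j)^{-r}`, and for
`0 ≤ x_j ≤ 1/2` every finite partial sum of `∑_α ∏_j x_j^{α_j}` is bounded by
`∏_j (1 - x_j)⁻¹ ≤ exp (2 ∑_j x_j)`, which is finite for `r ≥ 2`. -/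

open Finset

theorem Finset.sum_finsupp_prod {ι α R : Type*} [Zero α] [CommSemiring R] (s : Finset ι)
    (t : ι → Finset α) (g : ι → α → R) :
    ∑ f ∈ s.finsupp t, ∏ i ∈ s, g i (f i) = ∏ i ∈ s, ∑ a ∈ t i, g i a := by
  classical
  rw [Finset.finsupp, sum_map, prod_sum]
  refine sum_congr rfl fun p _ => ?_
  rw [← prod_attach s]
  refine prod_congr rfl fun i _ => ?_
  simp [Finsupp.indicator_of_mem i.2]

theorem geom_sum_le_exp_two_mul {x : ℝ} (hx₀ : 0 ≤ x) (hx : x ≤ 1 / 2) (m : ℕ) :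
    ∑ n ∈ range m, x ^ n ≤ Real.exp (2 * x) := by
  have hx₁ : x < 1 := by linarith
  calc ∑ n ∈ range m, x ^ n ≤ ∑' n, x ^ n :=
        (summable_geometric_of_lt_one hx₀ hx₁).sum_le_tsum _ fun n _ => pow_nonneg hx₀ n
    _ = (1 - x)⁻¹ := tsum_geometric_of_lt_one hx₀ hx₁
    _ ≤ 1 + 2 * x := by
        rw [inv_le_iff_one_le_mul₀ (by linarith)]
        nlinarith
    _ ≤ Real.exp (2 * x) := by linarith [Real.add_one_le_exp (2 * x)]

theorem summable_finsuppProd_pow {ι : Type*} {x : ι → ℝ} (hx₀ : ∀ i, 0 ≤ x i)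
    (hx : ∀ i, x i ≤ 1 / 2) (hs : Summable x) :
    Summable fun α : ι →₀ ℕ => α.prod fun i n => x i ^ n := by
  classical
  refine summable_of_sum_le (c := Real.exp (2 * ∑' i, x i))
    (fun α => prod_nonneg fun i _ => pow_nonneg (hx₀ i) _) fun s => ?_
  set T := s.biUnion Finsupp.support
  set M := s.sup fun α => α.support.sup α
  have hsupp : ∀ α ∈ s, α.support ⊆ T := fun α hα => subset_biUnion_of_mem _ hα
  have hbox : s ⊆ T.finsupp fun _ => range (M + 1) := by
    intro α hα
    refine mem_finsupp_iff.2 ⟨hsupp α hα, fun i _ => mem_range_succ_iff.2 ?_⟩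
    by_cases hi : i ∈ α.support
    · exact (le_sup hi).trans (le_sup (f := fun α => α.support.sup α) hα)
    · simp [Finsupp.notMem_support_iff.1 hi]
  calc ∑ α ∈ s, α.prod (fun i n => x i ^ n)
      = ∑ α ∈ s, ∏ i ∈ T, x i ^ α i :=
        sum_congr rfl fun α hα =>
          Finsupp.prod_of_support_subset _ (hsupp α hα) _ fun _ _ => pow_zero _
    _ ≤ ∑ α ∈ T.finsupp fun _ => range (M + 1), ∏ i ∈ T, x i ^ α i :=
        sum_le_sum_of_subset_of_nonneg hbox fun _ _ _ =>
          prod_nonneg fun i _ => pow_nonneg (hx₀ i) _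
    _ = ∏ i ∈ T, ∑ n ∈ range (M + 1), x i ^ n := sum_finsupp_prod _ _ _
    _ ≤ ∏ i ∈ T, Real.exp (2 * x i) :=
        prod_le_prod (fun i _ => sum_nonneg fun n _ => pow_nonneg (hx₀ i) n)
          fun i _ => geom_sum_le_exp_two_mul (hx₀ i) (hx i) _
    _ = Real.exp (2 * ∑ i ∈ T, x i) := by rw [← Real.exp_sum, mul_sum]
    _ ≤ Real.exp (2 * ∑' i, x i) := by
        gcongr
        exact hs.sum_le_tsum _ fun i _ => hx₀ i

theorem wt_add (a b : ℤ) (α : ℕ →₀ ℕ) : wt (a + b) α = wt a α * wt b α := by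
  rw [wt, wt, wt, ← prod_mul_distrib]
  refine prod_congr rfl fun j _ => ?_
  rw [← zpow_add₀ (by positivity)]
  congr 1
  ring

theorem wt_nonneg (k : ℤ) (α : ℕ →₀ ℕ) : 0 ≤ wt k α :=
  prod_nonneg fun _ _ => zpow_nonneg (by positivity) _

theorem norm_sq_mul_wt_nonneg (z : ℂ) (k : ℤ) (α : ℕ →₀ ℕ) : 0 ≤ ‖z‖ ^ 2 * wt k α :=
  mul_nonneg (sq_nonneg _) (wt_nonneg k α)

theorem wt_eq_prod_pow (k : ℤ) (α : ℕ →₀ ℕ) :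
    wt k α = α.prod fun j n => ((2 * ((j : ℝ) + 1)) ^ (-k)) ^ n :=
  prod_congr rfl fun j _ => by rw [zpow_mul, zpow_natCast]

theorem wt_apply_add (k : ℤ) (α β : ℕ →₀ ℕ) : wt k (α + β) = wt k α * wt k β := by
  simp only [wt_eq_prod_pow]
  exact Finsupp.prod_add_index' (fun _ => pow_zero _) fun _ _ _ => pow_add _ _ _

theorem summable_wt {r : ℤ} (hr : 1 < r) : Summable (wt r) := by
  set x : ℕ → ℝ := fun j => (2 * ((j : ℝ) + 1)) ^ (-r)
  have hbase : ∀ j : ℕ, (1 : ℝ) ≤ 2 * ((j : ℝ) + 1) := fun j => by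
    linarith [(j.cast_nonneg : (0 : ℝ) ≤ j)]
  have hx_le_inv_pow : ∀ j, ∀ s : ℕ, s ≤ r → x j ≤ ((2 * ((j : ℝ) + 1)) ^ s)⁻¹ := by
    intro j s hs
    rw [← zpow_natCast, ← zpow_neg]
    exact zpow_le_zpow_right₀ (hbase j) (by omega)
  have hx_half : ∀ j, x j ≤ 1 / 2 := by
    intro j
    refine (hx_le_inv_pow j 1 hr.le).trans ?_
    rw [pow_one, one_div]
    exact inv_anti₀ (by norm_num) (by linarith [hbase j, (j.cast_nonneg : (0 : ℝ) ≤ j)])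
  have hx_sq : ∀ j : ℕ, x j ≤ (((j + 1 : ℕ) : ℝ) ^ 2)⁻¹ := by
    intro j
    refine (hx_le_inv_pow j 2 (by omega)).trans
      (inv_anti₀ (by positivity) (pow_le_pow_left₀ (by positivity) ?_ 2))
    push_cast
    linarith [(j.cast_nonneg : (0 : ℝ) ≤ j)]
  have hx_sum : Summable x :=
    ((summable_nat_add_iff 1).2 (Real.summable_nat_pow_inv.2 one_lt_two)).of_nonneg_of_le
      (fun j => zpow_nonneg (by positivity) _) hx_sq
  simpa only [funext (wt_eq_prod_pow r)] using
    summable_finsuppProd_pow (fun j => zpow_nonneg (by positivity) _) hx_half hx_sum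

theorem sum_antidiagonal_fst_le_tsum {M : Type*} [AddMonoid M] [IsLeftCancelAdd M]
    [HasAntidiagonal M] {g : M → ℝ} (hg : 0 ≤ g) (hs : Summable g) (n : M) :
    ∑ p ∈ antidiagonal n, g p.1 ≤ ∑' m, g m := by
  classical
  have hfst : Set.InjOn Prod.fst (antidiagonal n : Set (M × M)) := fun p hp q hq hpq =>
    Prod.ext hpq <| add_left_cancel (a := p.1) <| by
      rw [mem_antidiagonal.1 hp, hpq, mem_antidiagonal.1 hq]
  rw [← sum_image hfst]
  exact hs.sum_le_tsum _ fun m _ => hg m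

theorem tsum_le_mul_tsum_mul_tsum_of_le_antidiagonal {M : Type*} [AddCommMonoid M]
    [HasAntidiagonal M] {g u v : M → ℝ} {C : ℝ} (hg : 0 ≤ g) (hu : 0 ≤ u) (hv : 0 ≤ v)
    (hus : Summable u) (hvs : Summable v)
    (hle : ∀ n, g n ≤ C * ∑ p ∈ antidiagonal n, u p.1 * v p.2) :
    ∑' n, g n ≤ C * ((∑' n, u n) * ∑' n, v n) := by
  have huv : Summable fun p : M × M => u p.1 * v p.2 := hus.mul_of_nonneg hvs hu hv
  have hsum := (summable_sum_mul_antidiagonal_of_summable_mul huv).mul_left C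
  calc ∑' n, g n ≤ ∑' n, C * ∑ p ∈ antidiagonal n, u p.1 * v p.2 :=
        (hsum.of_nonneg_of_le hg hle).tsum_le_tsum hle hsum
    _ = C * ((∑' n, u n) * ∑' n, v n) := by
        rw [tsum_mul_left, hus.tsum_mul_tsum_eq_tsum_sum_antidiagonal hvs huv]

theorem norm_wick_sq_mul_wt_le (k l : ℤ) (h f : (ℕ →₀ ℕ) → ℂ) (γ : ℕ →₀ ℕ) :
    ‖wick h f γ‖ ^ 2 * wt k γ ≤ (∑ p ∈ antidiagonal γ, wt (k - l) p.1) *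
      ∑ p ∈ antidiagonal γ, ‖h p.1‖ ^ 2 * wt l p.1 * (‖f p.2‖ ^ 2 * wt k p.2) := by
  have hnorm : ‖wick h f γ‖ ≤ ∑ p ∈ antidiagonal γ, ‖h p.1‖ * ‖f p.2‖ :=
    (norm_sum_le _ _).trans_eq (by simp only [norm_mul])
  calc ‖wick h f γ‖ ^ 2 * wt k γ
      ≤ (∑ p ∈ antidiagonal γ, ‖h p.1‖ * ‖f p.2‖) ^ 2 * wt k γ :=
        mul_le_mul_of_nonneg_right (pow_le_pow_left₀ (norm_nonneg _) hnorm 2) (wt_nonneg _ _)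
    _ = (∑ p ∈ antidiagonal γ, ‖h p.1‖ * ‖f p.2‖ * √(wt k γ)) ^ 2 := by
        rw [← sum_mul, mul_pow, Real.sq_sqrt (wt_nonneg _ _)]
    _ ≤ _ := by
        refine sum_sq_le_sum_mul_sum_of_sq_le_mul _ (fun _ _ => wt_nonneg _ _)
          (fun _ _ => mul_nonneg (norm_sq_mul_wt_nonneg _ _ _) (norm_sq_mul_wt_nonneg _ _ _))
          fun p hp => le_of_eq ?_
        have hsplit : wt k γ = wt (k - l) p.1 * wt l p.1 * wt k p.2 := by
          rw [← mem_antidiagonal.1 hp, wt_apply_add, ← wt_add, sub_add_cancel]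
        rw [mul_pow, Real.sq_sqrt (wt_nonneg _ _), hsplit]
        ring

theorem tsum_norm_wick_sq_mul_wt_le {k l : ℤ} (hkl : l + 1 < k) {h f : (ℕ →₀ ℕ) → ℂ}
    (hh : Summable fun α => ‖h α‖ ^ 2 * wt l α)
    (hf : Summable fun α => ‖f α‖ ^ 2 * wt k α) :
    ∑' γ, ‖wick h f γ‖ ^ 2 * wt k γ ≤ (∑' α, wt (k - l) α) *
      ((∑' α, ‖h α‖ ^ 2 * wt l α) * ∑' α, ‖f α‖ ^ 2 * wt k α) :=
  tsum_le_mul_tsum_mul_tsum_of_le_antidiagonal (fun _ => norm_sq_mul_wt_nonneg _ _ _)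
    (fun _ => norm_sq_mul_wt_nonneg _ _ _) (fun _ => norm_sq_mul_wt_nonneg _ _ _) hh hf fun γ =>
    (norm_wick_sq_mul_wt_le k l h f γ).trans <| mul_le_mul_of_nonneg_right
      (sum_antidiagonal_fst_le_tsum (wt_nonneg _) (summable_wt (r := k - l) (by omega)) γ)
      (sum_nonneg fun _ _ =>
        mul_nonneg (norm_sq_mul_wt_nonneg _ _ _) (norm_sq_mul_wt_nonneg _ _ _))

/-- Våge's inequality: `‖h ∘ f‖_k ≤ A(k-l) ‖h‖_l ‖f‖_k` for `k > l + 1`. -/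
theorem vage_inequality (k l : ℤ) (hkl : l + 1 < k)
    (h f : (ℕ →₀ ℕ) → ℂ)
    (hh : Summable fun α => ‖h α‖ ^ 2 * wt l α)
    (hf : Summable fun α => ‖f α‖ ^ 2 * wt k α) :
    Real.sqrt (∑' γ : ℕ →₀ ℕ, ‖wick h f γ‖ ^ 2 * wt k γ) ≤
      Real.sqrt (∑' α : ℕ →₀ ℕ,
          ∏ j ∈ α.support, (2 * ((j : ℝ) + 1)) ^ ((l - k) * (α j : ℤ))) *
        Real.sqrt (∑' α : ℕ →₀ ℕ, ‖h α‖ ^ 2 * wt l α) *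
        Real.sqrt (∑' α : ℕ →₀ ℕ, ‖f α‖ ^ 2 * wt k α) := by
  have hA : (∑' α : ℕ →₀ ℕ,
      ∏ j ∈ α.support, (2 * ((j : ℝ) + 1)) ^ ((l - k) * (α j : ℤ))) = ∑' α, wt (k - l) α := by
    simp only [wt, neg_sub]
  have hA₀ : 0 ≤ ∑' α, wt (k - l) α := tsum_nonneg (wt_nonneg _)
  have hh₀ : 0 ≤ ∑' α, ‖h α‖ ^ 2 * wt l α := tsum_nonneg fun _ => norm_sq_mul_wt_nonneg _ _ _
  rw [hA, ← Real.sqrt_mul hA₀, ← Real.sqrt_mul (mul_nonneg hA₀ hh₀), mul_assoc]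
  exact Real.sqrt_le_sqrt (tsum_norm_wick_sq_mul_wt_le hkl hh hf)
end
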